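/- Assume the girth of X = J(v,k,i) equals 4, and let r = ⌈(k − i)/Δ⌉. Let A and B be vertices of X with x = |A ∩ B|. If r is even and x ∈ {⌊(k + i)/2⌋, ⌈(k + i)/2⌉}, then dist(A,B) = r. -/

import Mathlib

/-- The generalized Johnson graph `J(v,k,i)`: vertices are the `k`-element subsets of a
`v`-element set, two vertices adjacent iff their intersection has exactly `i` elements. -/
def genJohnsonGraph (v k i : ℕ) :
    SimpleGraph {A : Finset (Fin v) // A.card = k} where
  Adj A B := A ≠ B ∧ (A.1 ∩ B.1).card = i
  symm := by
    constructor
    rintro A B ⟨hne, hcard⟩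
    exact ⟨hne.symm, by rwa [Finset.inter_comm]⟩
  loopless := by constructor; rintro A ⟨hne, -⟩; exact hne rfl

/-!
Write `Δ = v - 2k + 2i` and `x = |A ∩ B|`. For adjacent `D, P` and any vertex `C`,
inclusion–exclusion gives `3k - i - v ≤ |D ∩ C| + |P ∩ C| ≤ k + i`; inducting along a walk
from `A` to `B`, a walk of length `2t` forces `k - x ≤ tΔ` and one of length `2t + 1` forces
`x - i ≤ tΔ`. Conversely, two vertices meeting in at least `max(i, k - Δ)` points have a common
neighbour, and swapping at most `Δ` points moves `B` that much closer to `A`, so there is a walk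
of length `2m` as soon as `k - x ≤ mΔ`. For `x ≈ (k + i)/2` and `r = 2m`, both `k - x` and
`x - i` exceed `(m - 1)Δ` while `k - x ≤ mΔ`, so `dist(A, B) = 2m`.
-/

open Finset

namespace Finset

variable {α : Type*} [DecidableEq α]

theorem exists_subset_card_eq_add_card_inter_eq {s t : Finset α} {a b : ℕ}
    (ha : a ≤ #(s ∩ t)) (hb : b ≤ #(s \ t)) :
    ∃ u ⊆ s, #u = a + b ∧ #(u ∩ t) = a := by
  obtain ⟨u₁, hu₁, rfl⟩ := exists_subset_card_eq ha
  obtain ⟨u₂, hu₂, rfl⟩ := exists_subset_card_eq hb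
  have h₁ : u₁ ∩ t = u₁ := inter_eq_left.2 (hu₁.trans inter_subset_right)
  have h₂ : Disjoint u₂ t := disjoint_of_subset_left hu₂ sdiff_disjoint
  refine ⟨u₁ ∪ u₂, union_subset (hu₁.trans inter_subset_left) (hu₂.trans sdiff_subset),
    card_union_of_disjoint (h₂.mono_right (hu₁.trans inter_subset_right)).symm, ?_⟩
  rw [union_inter_distrib_right, h₁, disjoint_iff_inter_eq_empty.1 h₂, union_empty]

theorem card_inter_add_card_inter_le (D P C : Finset α) :
    #(D ∩ C) + #(P ∩ C) ≤ #C + #(D ∩ P) := by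
  rw [← card_union_add_card_inter]
  gcongr
  · exact union_subset inter_subset_right inter_subset_right
  all_goals exact inter_subset_left

theorem card_add_card_union_le [Fintype α] (D P C : Finset α) :
    #C + #(D ∪ P) ≤ Fintype.card α + (#(D ∩ C) + #(P ∩ C)) := by
  rw [← card_union_add_card_inter]
  gcongr
  · exact card_le_univ _
  · rw [inter_union_distrib_left, inter_comm C, inter_comm C]
    exact card_union_le _ _

theorem exists_card_eq_card_inter_eq_add {A B : Finset α} {δ : ℕ} (hA : δ ≤ #(A \ B))
    (hB : δ ≤ #(B \ A)) :
    ∃ B' : Finset α, #B' = #B ∧ #(A ∩ B') = #(A ∩ B) + δ ∧ #(B' ∩ B) + δ = #B := by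
  obtain ⟨T, hT, rfl⟩ := exists_subset_card_eq hB
  obtain ⟨U, hU, hUc⟩ := exists_subset_card_eq hA
  have hTB : T ⊆ B := hT.trans sdiff_subset
  have hUB : Disjoint U B := disjoint_of_subset_left hU sdiff_disjoint
  have hB' : #(B \ T) + #T = #B := card_sdiff_add_card_eq_card hTB
  have hA' : A ∩ (B \ T ∪ U) = A ∩ B ∪ U := by
    ext x
    have := @hT x
    have := @hU x
    simp only [mem_inter, mem_union, mem_sdiff] at *
    grind
  have hB'' : (B \ T ∪ U) ∩ B = B \ T := by
    ext x
    have := @hU x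
    simp only [mem_inter, mem_union, mem_sdiff] at *
    grind
  refine ⟨B \ T ∪ U, ?_, ?_, ?_⟩
  · rw [card_union_of_disjoint (disjoint_of_subset_left sdiff_subset hUB.symm), hUc, hB']
  · rw [hA', card_union_of_disjoint (disjoint_of_subset_left inter_subset_right hUB.symm), hUc]
  · rw [hB'', hB']

theorem exists_card_inter_eq_card_inter_eq [Fintype α] {P Q : Finset α} {k i : ℕ}
    (hP : #P = k) (hQ : #Q = k) (h2k : 2 * k ≤ Fintype.card α) (hi : i ≤ #(P ∩ Q))
    (hk : k ≤ #(P ∩ Q) + (Fintype.card α - 2 * k + 2 * i)) :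
    ∃ R : Finset α, #R = k ∧ #(R ∩ P) = i ∧ #(R ∩ Q) = i := by
  have hPQ : #(P \ Q) + #(P ∩ Q) = k := hP ▸ card_sdiff_add_card_inter P Q
  have hQP : #(Pᶜ ∩ Q) + #(P ∩ Q) = k := by
    rw [inter_comm, ← sdiff_eq_inter_compl, inter_comm, card_sdiff_add_card_inter, hQ]
  have hout : #(Pᶜ \ Q) + #(P ∪ Q) = Fintype.card α := by
    rw [sdiff_eq_inter_compl, ← compl_union, card_compl_add_card]
  have hunion : #(P ∪ Q) + #(P ∩ Q) = 2 * k := by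
    rw [card_union_add_card_inter, hP, hQ, two_mul]
  -- `R` meets `P ∩ Q`, `P \ Q`, `Q \ P` and the outside of `P ∪ Q` in `s`, `i - s`, `i - s` and
  -- `k - 2i + s` elements, where `s = i - (k - |P ∩ Q|)`
  obtain ⟨u, huP, hu, huQ⟩ := exists_subset_card_eq_add_card_inter_eq (s := P) (t := Q)
    (a := i - (k - #(P ∩ Q))) (b := min i (k - #(P ∩ Q))) (by omega) (by omega)
  obtain ⟨w, hwP, hw, hwQ⟩ := exists_subset_card_eq_add_card_inter_eq (s := Pᶜ) (t := Q)
    (a := min i (k - #(P ∩ Q))) (b := k - i - min i (k - #(P ∩ Q))) (by omega) (by omega)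
  have hdisj : Disjoint u w := disjoint_of_subset_left huP (subset_compl_iff_disjoint_left.1 hwP)
  refine ⟨u ∪ w, ?_, ?_, ?_⟩
  · rw [card_union_of_disjoint hdisj]
    omega
  · rw [union_inter_distrib_right, inter_eq_left.2 huP,
      disjoint_iff_inter_eq_empty.1 (subset_compl_iff_disjoint_right.1 hwP), union_empty]
    omega
  · rw [union_inter_distrib_right, card_union_of_disjoint
      (hdisj.mono inter_subset_left inter_subset_left)]
    omega

end Finset

namespace genJohnsonGraph

variable {v k i : ℕ}

theorem adj_of_card_inter_eq (hik : i < k) {A B : {A : Finset (Fin v) // A.card = k}}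
    (h : #(A.1 ∩ B.1) = i) : (genJohnsonGraph v k i).Adj A B :=
  ⟨fun hAB => by rw [hAB, inter_self, B.2] at h; omega, h⟩

theorem eq_of_le_card_inter {A B : {A : Finset (Fin v) // A.card = k}}
    (h : k ≤ #(A.1 ∩ B.1)) : A = B := by
  have hA : A.1 ∩ B.1 = A.1 := eq_of_subset_of_card_le inter_subset_left (by rwa [A.2])
  exact Subtype.ext (eq_of_subset_of_card_le (inter_eq_left.1 hA) (by rw [A.2, B.2]))

theorem card_inter_bounds_of_walk (h2k : 2 * k ≤ v) {D C : {A : Finset (Fin v) // A.card = k}}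
    (w : (genJohnsonGraph v k i).Walk D C) :
    (∀ t, w.length = 2 * t → k ≤ #(D.1 ∩ C.1) + t * (v - 2 * k + 2 * i)) ∧
      (∀ t, w.length = 2 * t + 1 → #(D.1 ∩ C.1) ≤ i + t * (v - 2 * k + 2 * i)) := by
  induction w with
  | @nil D => exact ⟨fun t _ => by simp [D.2], fun t ht => by simp at ht⟩
  | @cons D P C hDP w ih =>
    have hunion : #(D.1 ∪ P.1) + i = 2 * k := by
      rw [← hDP.2, card_union_add_card_inter, D.2, P.2, two_mul]
    have hlow := card_add_card_union_le D.1 P.1 C.1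
    have hupp := card_inter_add_card_inter_le D.1 P.1 C.1
    rw [Fintype.card_fin, C.2] at hlow
    rw [C.2, hDP.2] at hupp
    simp only [SimpleGraph.Walk.length_cons]
    refine ⟨fun t ht => ?_, fun t ht => ?_⟩
    · obtain ⟨t, rfl⟩ : ∃ s, t = s + 1 := ⟨t - 1, by omega⟩
      have := ih.2 t (by omega)
      rw [add_one_mul]
      omega
    · have := ih.1 t (by omega)
      omega

theorem exists_walk_length_two (hik : i < k) (h2k : 2 * k ≤ v)
    {P Q : {A : Finset (Fin v) // A.card = k}} (hi : i ≤ #(P.1 ∩ Q.1))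
    (hk : k ≤ #(P.1 ∩ Q.1) + (v - 2 * k + 2 * i)) :
    ∃ w : (genJohnsonGraph v k i).Walk P Q, w.length = 2 := by
  obtain ⟨R, hR, hRP, hRQ⟩ := exists_card_inter_eq_card_inter_eq P.2 Q.2
    (by rwa [Fintype.card_fin]) hi (by rwa [Fintype.card_fin])
  let R' : {A : Finset (Fin v) // A.card = k} := ⟨R, hR⟩
  exact ⟨.cons (adj_of_card_inter_eq hik (A := R') hRP).symm
    (.cons (adj_of_card_inter_eq hik (A := R') hRQ) .nil), rfl⟩

theorem exists_walk_length_eq_two_mul (hik : i < k) (h2k : 2 * k ≤ v)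
    (hΔ : i + (v - 2 * k + 2 * i) ≤ k) (m : ℕ) {A B : {A : Finset (Fin v) // A.card = k}}
    (h : k ≤ #(A.1 ∩ B.1) + m * (v - 2 * k + 2 * i)) :
    ∃ w : (genJohnsonGraph v k i).Walk A B, w.length = 2 * m := by
  induction m generalizing B with
  | zero =>
    obtain rfl := eq_of_le_card_inter (by simpa using h)
    exact ⟨.nil, rfl⟩
  | succ m ih =>
    have hAB : #(A.1 \ B.1) + #(A.1 ∩ B.1) = k := by
      rw [card_sdiff_add_card_inter, A.2]
    have hBA : #(B.1 \ A.1) + #(A.1 ∩ B.1) = k := by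
      rw [inter_comm, card_sdiff_add_card_inter, B.2]
    obtain ⟨B', hB'k, hAB', hB'B⟩ := exists_card_eq_card_inter_eq_add (A := A.1) (B := B.1)
      (δ := min (v - 2 * k + 2 * i) (k - #(A.1 ∩ B.1))) (by omega) (by omega)
    rw [B.2] at hB'k hB'B
    obtain ⟨w, hw⟩ := ih (B := ⟨B', hB'k⟩) (by rw [add_one_mul] at h; simp only; omega)
    obtain ⟨w', hw'⟩ := exists_walk_length_two hik h2k (P := ⟨B', hB'k⟩) (Q := B)
      (by simp only; omega) (by simp only; omega)
    exact ⟨w.append w', by rw [SimpleGraph.Walk.length_append, hw, hw']; ring⟩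

theorem two_mul_add_one_lt_length (h2k : 2 * k ≤ v) {m : ℕ}
    {A B : {A : Finset (Fin v) // A.card = k}} (hk : #(A.1 ∩ B.1) + m * (v - 2 * k + 2 * i) < k)
    (hi : i + m * (v - 2 * k + 2 * i) < #(A.1 ∩ B.1)) (w : (genJohnsonGraph v k i).Walk A B) :
    2 * m + 1 < w.length := by
  obtain ⟨hev, hodd⟩ := card_inter_bounds_of_walk h2k w
  by_contra! hlt
  obtain ⟨t, ht | ht⟩ := Nat.even_or_odd' w.length
  · have := Nat.mul_le_mul_right (v - 2 * k + 2 * i) (show t ≤ m by omega)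
    have := hev t ht
    omega
  · have := Nat.mul_le_mul_right (v - 2 * k + 2 * i) (show t ≤ m by omega)
    have := hodd t ht
    omega

end genJohnsonGraph

theorem Nat.mul_lt_of_ceilDiv_eq_add_one {a b c : ℕ} (hb : 0 < b) (h : a ⌈/⌉ b = c + 1) :
    b * c < a := by
  by_contra! hle
  have := (ceilDiv_le_iff_le_mul hb).2 hle
  omega

theorem SimpleGraph.dist_eq_of_exists_walk_of_forall_le_length {V : Type*} {G : SimpleGraph V}
    {u v : V} {n : ℕ} (h : ∃ w : G.Walk u v, w.length = n)
    (hle : ∀ w : G.Walk u v, n ≤ w.length) : G.dist u v = n := by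
  obtain ⟨w, rfl⟩ := h
  obtain ⟨p, hp⟩ := w.reachable.exists_walk_length_eq_dist
  exact le_antisymm (dist_le w) (hp ▸ hle p)

theorem dist_eq_r_even_general (v k i : ℕ) (hik : i < k)
    (h2k : 2 * k ≤ v) (hexc : ¬(v = 2 * k ∧ i = 0))
    (hr : Even ((k - i) ⌈/⌉ (v - 2 * k + 2 * i)))
    (A B : {A : Finset (Fin v) // A.card = k})
    (hx : (A.1 ∩ B.1).card = (k + i) / 2 ∨
          (A.1 ∩ B.1).card = (k + i) ⌈/⌉ 2) :
    (genJohnsonGraph v k i).dist A B = (k - i) ⌈/⌉ (v - 2 * k + 2 * i) := by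
  set Δ := v - 2 * k + 2 * i
  have hΔ : 0 < Δ := by omega
  obtain ⟨r, hr⟩ := hr
  rw [← two_mul] at hr
  have hle : k - i ≤ Δ * (2 * r) := hr ▸ le_smul_ceilDiv hΔ
  obtain ⟨m, rfl⟩ : ∃ m, r = m + 1 :=
    Nat.exists_eq_succ_of_ne_zero (by rintro rfl; simp at hle; omega)
  have hlt : Δ * (2 * m + 1) < k - i := Nat.mul_lt_of_ceilDiv_eq_add_one hΔ (by rw [hr]; ring)
  rw [show Δ * (2 * (m + 1)) = 2 * (m * Δ) + 2 * Δ by ring] at hle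
  rw [show Δ * (2 * m + 1) = 2 * (m * Δ) + Δ by ring] at hlt
  rw [Nat.ceilDiv_eq_add_pred_div] at hx
  rw [hr]
  apply SimpleGraph.dist_eq_of_exists_walk_of_forall_le_length
  · exact genJohnsonGraph.exists_walk_length_eq_two_mul hik h2k (show i + Δ ≤ k by omega) (m + 1)
      (show k ≤ _ + (m + 1) * Δ by rw [add_one_mul]; omega)
  · intro p
    have := genJohnsonGraph.two_mul_add_one_lt_length h2k (show _ + m * Δ < k by omega)
      (show i + m * Δ < _ by omega) p
    omega

/-- Assume `J(v,k,i)` has girth 4 and let `r = ⌈(k-i)/Δ⌉`. If `r` is even and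
`x = |A ∩ B| ∈ {⌊(k+i)/2⌋, ⌈(k+i)/2⌉}`, then `dist(A,B) = r`. -/
theorem dist_eq_r_even (v k i : ℕ) (hik : i < k) (hkv : k < v)
    (h2k : 2 * k ≤ v) (hexc : ¬(v = 2 * k ∧ i = 0))
    (hg : (genJohnsonGraph v k i).girth = 4)
    (hr : Even ((k - i) ⌈/⌉ (v - 2 * k + 2 * i)))
    (A B : {A : Finset (Fin v) // A.card = k})
    (hx : (A.1 ∩ B.1).card = (k + i) / 2 ∨
          (A.1 ∩ B.1).card = (k + i) ⌈/⌉ 2) :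
    (genJohnsonGraph v k i).dist A B = (k - i) ⌈/⌉ (v - 2 * k + 2 * i) :=
  dist_eq_r_even_general v k i hik h2k hexc hr A B hx
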